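/- For φ ∈ [0,2π), define g(φ) = s̃(cos φ) + s̃(sin φ), where s̃(v) = (1/2)∑_{k=±1}(1+kv) log₂((1+kv)/(1+kv/√2)). Then g attains its maximum over [0,2π) exactly at φ ∈ {0, π/2, π, 3π/2}, and the maximum value is log₂(2(2−√2)). -/

import Mathlib

/-!
Write `2 ln 2 · s̃ = S_c` at `c = 1/√2`, where `S_c(v) = stilLn c v =
(1+v) ln(1+v) + (1-v) ln(1-v) - (1+v) ln(1+cv) - (1-v) ln(1-cv)`, and vary `c`.
`S_1 ≡ 0`, `S_c(0) = 0`, `S_c` is even, and `∂S_c(v)/∂c = -2(1-c) v²/(1-c²v²)`.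
For `x² + y² = 1` with `xy ≠ 0`, strict superadditivity of `t ↦ t/(1-c²t)` makes
`c ↦ S_c(1) - S_c(x) - S_c(y)` strictly decreasing on `[0,1]`; it vanishes at `c = 1`, so it is
positive for `c < 1`. When `xy = 0`, `{|x|, |y|} = {0, 1}` and equality holds. For `x = cos φ`,
`y = sin φ` this singles out the multiples of `π/2`.
-/

open Real

/-- The function `s̃(v) = (1/2)∑_{k=±1}(1+kv) log₂((1+kv)/(1+kv/√2))`. -/
noncomputable def stil (v : ℝ) : ℝ :=
  (1/2) * ((1 + v) * Real.logb 2 ((1 + v) / (1 + v / Real.sqrt 2)) +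
    (1 - v) * Real.logb 2 ((1 - v) / (1 - v / Real.sqrt 2)))

open Set

noncomputable def stilLn (c v : ℝ) : ℝ :=
  (1 + v) * log (1 + v) + (1 - v) * log (1 - v) - (1 + v) * log (1 + v * c) -
    (1 - v) * log (1 - v * c)

lemma stilLn_neg (c v : ℝ) : stilLn c (-v) = stilLn c v := by
  simp only [stilLn, neg_mul, sub_neg_eq_add, ← sub_eq_add_neg]
  ring

lemma stilLn_zero (c : ℝ) : stilLn c 0 = 0 := by
  simp [stilLn]

lemma stilLn_one_left (v : ℝ) : stilLn 1 v = 0 := by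
  simp [stilLn]

lemma stilLn_one (c : ℝ) : stilLn c 1 = 2 * log 2 - 2 * log (1 + c) := by
  norm_num [stilLn]

lemma hasDerivAt_stilLn_param {c v : ℝ} (h : |v * c| < 1) :
    HasDerivAt (stilLn · v) (-2 * (1 - c) * (v ^ 2 / (1 - v ^ 2 * c ^ 2))) c := by
  obtain ⟨h₁, h₂⟩ := abs_lt.1 h
  have hp : 1 + v * c ≠ 0 := by linarith
  have hm : 1 - v * c ≠ 0 := by linarith
  have dp := (((hasDerivAt_id' c).const_mul v).const_add 1).log hp
  have dm := (((hasDerivAt_id' c).const_mul v).const_sub 1).log hm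
  refine (((dp.const_mul (1 + v)).const_sub _).sub (dm.const_mul (1 - v))).congr_deriv ?_
  rw [show 1 - v ^ 2 * c ^ 2 = (1 + v * c) * (1 - v * c) by ring]
  field_simp
  ring

lemma add_div_one_sub_mul_lt {k a b : ℝ} (hk : 0 < k) (ha : 0 < a) (hb : 0 < b)
    (hab : k * (a + b) < 1) :
    a / (1 - k * a) + b / (1 - k * b) < (a + b) / (1 - k * (a + b)) := by
  have hka : 0 < 1 - k * a := by nlinarith
  have hkb : 0 < 1 - k * b := by nlinarith
  rw [div_add_div _ _ hka.ne' hkb.ne', div_lt_div_iff₀ (by positivity) (by linarith)]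
  nlinarith [mul_pos (mul_pos hk ha) hb, mul_pos (mul_pos (mul_pos hk ha) hb) (mul_pos hka hkb)]

lemma abs_mul_lt_one_of_mem_Icc {v c : ℝ} (hv : |v| < 1) (hc : c ∈ Icc (0 : ℝ) 1) :
    |v * c| < 1 := by
  rw [abs_mul, abs_of_nonneg hc.1]
  nlinarith [abs_nonneg v, hc.2]

lemma abs_lt_one_of_sq_add_sq_eq_one {x y : ℝ} (h : x ^ 2 + y ^ 2 = 1) (hy : y ≠ 0) :
    |x| < 1 := by
  rw [← sq_lt_one_iff_abs_lt_one]
  linarith [pow_pos (abs_pos.2 hy) 2, sq_abs y]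

noncomputable def stilGap (x y c : ℝ) : ℝ := stilLn c 1 - stilLn c x - stilLn c y

section
variable {x y : ℝ}

lemma hasDerivAt_stilGap (hx : |x| < 1) (hy : |y| < 1) {c : ℝ} (hc : c ∈ Ico (0 : ℝ) 1) :
    HasDerivAt (stilGap x y) (-2 * (1 - c) *
      (1 / (1 - c ^ 2) - x ^ 2 / (1 - x ^ 2 * c ^ 2) - y ^ 2 / (1 - y ^ 2 * c ^ 2))) c := by
  have hc' : c ∈ Icc (0 : ℝ) 1 := Ico_subset_Icc_self hc
  have h1 := hasDerivAt_stilLn_param (v := 1) (c := c)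
    (by rw [one_mul, abs_of_nonneg hc.1]; exact hc.2)
  refine ((h1.sub (hasDerivAt_stilLn_param (abs_mul_lt_one_of_mem_Icc hx hc'))).sub
    (hasDerivAt_stilLn_param (abs_mul_lt_one_of_mem_Icc hy hc'))).congr_deriv ?_
  simp only [one_pow, one_mul]
  ring

lemma continuousOn_stilGap (hx : |x| < 1) (hy : |y| < 1) :
    ContinuousOn (stilGap x y) (Icc 0 1) := by
  intro c hc
  have h1 : ContinuousAt (stilLn · 1) c := by
    have : 1 + c ≠ 0 := by linarith [hc.1]
    simp only [stilLn_one]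
    fun_prop (disch := exact this)
  exact ((h1.sub (hasDerivAt_stilLn_param (abs_mul_lt_one_of_mem_Icc hx hc)).continuousAt).sub
    (hasDerivAt_stilLn_param (abs_mul_lt_one_of_mem_Icc hy hc)).continuousAt).continuousWithinAt

lemma strictAntiOn_stilGap (hxy : x ^ 2 + y ^ 2 = 1) (hx : x ≠ 0) (hy : y ≠ 0) :
    StrictAntiOn (stilGap x y) (Icc 0 1) := by
  have hx₁ := abs_lt_one_of_sq_add_sq_eq_one hxy hy
  have hy₁ := abs_lt_one_of_sq_add_sq_eq_one ((add_comm _ _).trans hxy) hx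
  refine strictAntiOn_of_deriv_neg (convex_Icc 0 1) (continuousOn_stilGap hx₁ hy₁) fun c hc ↦ ?_
  rw [interior_Icc] at hc
  rw [(hasDerivAt_stilGap hx₁ hy₁ (Ioo_subset_Ico_self hc)).deriv]
  have key := add_div_one_sub_mul_lt (pow_pos hc.1 2) (by positivity : 0 < x ^ 2)
    (by positivity : 0 < y ^ 2) (by rw [hxy, mul_one]; nlinarith [hc.1, hc.2])
  rw [hxy, mul_one, mul_comm _ (x ^ 2), mul_comm _ (y ^ 2)] at key
  exact mul_neg_of_neg_of_pos (by linarith [hc.2]) (by linarith)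

end

lemma stilLn_add_stilLn_lt {c x y : ℝ} (hc₀ : 0 ≤ c) (hc₁ : c < 1) (hxy : x ^ 2 + y ^ 2 = 1)
    (hx : x ≠ 0) (hy : y ≠ 0) : stilLn c x + stilLn c y < stilLn c 1 := by
  have := strictAntiOn_stilGap hxy hx hy ⟨hc₀, hc₁.le⟩ ⟨zero_le_one, le_rfl⟩ hc₁
  simp only [stilGap, stilLn_one_left, sub_zero] at this
  linarith

lemma stilLn_add_stilLn_of_mul_eq_zero (c : ℝ) {x y : ℝ} (hxy : x ^ 2 + y ^ 2 = 1)
    (h : x * y = 0) : stilLn c x + stilLn c y = stilLn c 1 := by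
  rcases mul_eq_zero.1 h with rfl | rfl
  · rcases (by simpa using hxy : y = 1 ∨ y = -1) with rfl | rfl <;> simp [stilLn_zero, stilLn_neg]
  · rcases (by simpa using hxy : x = 1 ∨ x = -1) with rfl | rfl <;> simp [stilLn_zero, stilLn_neg]

lemma stilLn_add_stilLn_le {c x y : ℝ} (hc₀ : 0 ≤ c) (hc₁ : c < 1) (hxy : x ^ 2 + y ^ 2 = 1) :
    stilLn c x + stilLn c y ≤ stilLn c 1 ∧ (stilLn c x + stilLn c y = stilLn c 1 ↔ x * y = 0) := by
  by_cases h : x * y = 0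
  · exact ⟨(stilLn_add_stilLn_of_mul_eq_zero c hxy h).le, iff_of_true
      (stilLn_add_stilLn_of_mul_eq_zero c hxy h) h⟩
  · obtain ⟨hx, hy⟩ := mul_ne_zero_iff.1 h
    have hlt := stilLn_add_stilLn_lt hc₀ hc₁ hxy hx hy
    exact ⟨hlt.le, iff_of_false hlt.ne h⟩

lemma mul_log_div_eq {x y : ℝ} (hy : y ≠ 0) : x * log (x / y) = x * log x - x * log y := by
  rcases eq_or_ne x 0 with rfl | hx
  · simp
  · rw [log_div hx hy, mul_sub]

lemma stil_eq_stilLn_div {v : ℝ} (hv : |v| ≤ 1) :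
    stil v = stilLn (√2)⁻¹ v / (2 * log 2) := by
  have hv' : |v / √2| < 1 := by
    rw [abs_div, abs_of_pos (by positivity : (0 : ℝ) < √2), div_lt_one (by positivity)]
    linarith [one_lt_sqrt_two]
  obtain ⟨h₁, h₂⟩ := abs_lt.1 hv'
  simp only [stil, stilLn, logb, ← div_eq_mul_inv, mul_div_assoc',
    mul_log_div_eq (by linarith : 1 + v / √2 ≠ 0), mul_log_div_eq (by linarith : 1 - v / √2 ≠ 0)]
  field_simp
  ring

lemma stil_one : stil 1 = logb 2 (2 * (2 - √2)) := by
  have h : 2 / (1 + (√2)⁻¹) = 2 * (2 - √2) := by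
    field_simp
    nlinarith [sq_sqrt (zero_le_two : (0 : ℝ) ≤ 2)]
  norm_num [stil, h]
  ring

lemma stil_add_stil_le {x y : ℝ} (hxy : x ^ 2 + y ^ 2 = 1) :
    stil x + stil y ≤ stil 1 ∧ (stil x + stil y = stil 1 ↔ x * y = 0) := by
  have hx : |x| ≤ 1 := (sq_le_one_iff_abs_le_one x).1 (by nlinarith [sq_nonneg y])
  have hy : |y| ≤ 1 := (sq_le_one_iff_abs_le_one y).1 (by nlinarith [sq_nonneg x])
  have hlog : 0 < 2 * log 2 := by positivity
  rw [stil_eq_stilLn_div hx, stil_eq_stilLn_div hy, stil_eq_stilLn_div abs_one.le, ← add_div,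
    div_le_div_iff_of_pos_right hlog, div_left_inj' hlog.ne']
  exact stilLn_add_stilLn_le (by positivity) (inv_lt_one_of_one_lt₀ one_lt_sqrt_two) hxy

lemma cos_mul_sin_eq_zero_iff_of_mem_Ico {φ : ℝ} (hφ : φ ∈ Ico 0 (2 * π)) :
    cos φ * sin φ = 0 ↔ φ = 0 ∨ φ = π / 2 ∨ φ = π ∨ φ = 3 * π / 2 := by
  rw [← mul_eq_zero_iff_left two_ne_zero, ← mul_assoc, mul_right_comm, ← sin_two_mul,
    sin_eq_zero_iff]
  constructor
  · rintro ⟨n, hn⟩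
    have h₀ : 0 ≤ n := by exact_mod_cast (by nlinarith [hφ.1, pi_pos] : (0 : ℝ) ≤ n)
    have h₄ : n < 4 := by exact_mod_cast (by nlinarith [hφ.2, pi_pos] : (n : ℝ) < 4)
    interval_cases n <;> push_cast at hn
    exacts [Or.inl (by linarith), Or.inr (Or.inl (by linarith)),
      Or.inr (Or.inr (Or.inl (by linarith))), Or.inr (Or.inr (Or.inr (by linarith)))]
  · rintro (rfl | rfl | rfl | rfl)
    exacts [⟨0, by simp⟩, ⟨1, by ring⟩, ⟨2, by ring⟩, ⟨3, by ring⟩]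

/-- `g(φ) = s̃(cos φ) + s̃(sin φ)` attains its maximum on `[0,2π)` exactly at
`φ ∈ {0, π/2, π, 3π/2}`, with maximum value `log₂(2(2−√2))`. -/
theorem stmt18 :
    ∀ φ ∈ Set.Ico (0 : ℝ) (2 * Real.pi),
      stil (Real.cos φ) + stil (Real.sin φ) ≤ Real.logb 2 (2 * (2 - Real.sqrt 2)) ∧
        (stil (Real.cos φ) + stil (Real.sin φ) = Real.logb 2 (2 * (2 - Real.sqrt 2)) ↔
          φ = 0 ∨ φ = Real.pi / 2 ∨ φ = Real.pi ∨ φ = 3 * Real.pi / 2) := by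
  intro φ hφ
  rw [← stil_one, ← cos_mul_sin_eq_zero_iff_of_mem_Ico hφ]
  exact stil_add_stil_le (cos_sq_add_sin_sq φ)
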